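/- For a (long enough) path P, the minimum over all injective time assignments t of the maximum temporal reachability of (P, t) equals 4. -/
import Mathlib


variable {V : Type*}

/-- Strict temporal reachability: `TReach G t u v τ` means there is a strict temporal
path from `u` to `v` whose last edge is active at time `τ`. -/
inductive TReach (G : SimpleGraph V) (t : Sym2 V → ℕ) (u : V) : V → ℕ → Prop
  | single {v : V} (h : G.Adj u v) : TReach G t u v (t s(u, v))
  | cons {v w : V} {τ : ℕ} (h : TReach G t u v τ) (hadj : G.Adj v w)
      (hlt : τ < t s(v, w)) : TReach G t u w (t s(v, w))

/-- The temporal reachability set of `u`: `u` together with all vertices reachable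
from `u` by a strict temporal path. -/
def reachSet (G : SimpleGraph V) (t : Sym2 V → ℕ) (u : V) : Set V :=
  {v | v = u ∨ ∃ τ, TReach G t u v τ}

open SimpleGraph

lemma self_mem_reachSet (G : SimpleGraph V) (t : Sym2 V → ℕ) (u : V) :
    u ∈ reachSet G t u := Or.inl rfl

lemma mem_reachSet_of_treach {G : SimpleGraph V} {t : Sym2 V → ℕ} {u v : V} {τ : ℕ}
    (h : TReach G t u v τ) : v ∈ reachSet G t u := Or.inr ⟨τ, h⟩

lemma chain_reach {G : SimpleGraph V} {t : Sym2 V → ℕ} {u v w x : V}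
    (h1 : G.Adj u v) (h2 : G.Adj v w) (h3 : G.Adj w x)
    (l1 : t s(u,v) < t s(v,w)) (l2 : t s(v,w) < t s(w,x)) :
    v ∈ reachSet G t u ∧ w ∈ reachSet G t u ∧ x ∈ reachSet G t u :=
  ⟨mem_reachSet_of_treach (.single h1),
   mem_reachSet_of_treach (.cons (.single h1) h2 l1),
   mem_reachSet_of_treach (.cons (.cons (.single h1) h2 l1) h3 l2)⟩

lemma valley_reach {G : SimpleGraph V} {t : Sym2 V → ℕ} {u v w x : V}
    (h1 : G.Adj u v) (h2 : G.Adj v x) (h3 : G.Adj u w)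
    (l : t s(u,v) < t s(v,x)) :
    v ∈ reachSet G t u ∧ x ∈ reachSet G t u ∧ w ∈ reachSet G t u :=
  ⟨mem_reachSet_of_treach (.single h1),
   mem_reachSet_of_treach (.cons (.single h1) h2 l),
   mem_reachSet_of_treach (.single h3)⟩

lemma four_le_ncard {α : Type*} {s : Set α} {a b c d : α}
    (hab : a ≠ b) (hac : a ≠ c) (had : a ≠ d) (hbc : b ≠ c) (hbd : b ≠ d) (hcd : c ≠ d)
    (ha : a ∈ s) (hb : b ∈ s) (hc : c ∈ s) (hd : d ∈ s) (hfin : s.Finite) :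
    4 ≤ s.ncard := by
  have hsub : ({a, b, c, d} : Set α) ⊆ s := by
    intro x hx
    rcases hx with rfl | rfl | rfl | rfl <;> assumption
  have hfd : ({d} : Set α).Finite := Set.finite_singleton d
  have hfcd : ({c, d} : Set α).Finite := hfd.insert c
  have hfbcd : ({b, c, d} : Set α).Finite := hfcd.insert b
  have h4 : ({a, b, c, d} : Set α).ncard = 4 := by
    rw [Set.ncard_insert_of_notMem (by simp [hab, hac, had]) hfbcd,
      Set.ncard_insert_of_notMem (by simp [hbc, hbd]) hfcd,
      Set.ncard_insert_of_notMem (by simp [hcd]) hfd,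
      Set.ncard_singleton]
  calc 4 = ({a, b, c, d} : Set α).ncard := h4.symm
    _ ≤ s.ncard := Set.ncard_le_ncard hsub hfin

/-- The optimal time assignment: edge `{i, i+1}` gets time `i+2` if `i` is even,
`i` if `i` is odd. -/
def g (k : ℕ) : ℕ := k + 2 - 2 * (k % 2)

def myt (n : ℕ) : Sym2 (Fin n) → ℕ :=
  Sym2.lift ⟨fun i j => g (min i.val j.val), fun i j => by simp [min_comm]⟩

lemma myt_mk {n : ℕ} (u v : Fin n) : myt n s(u, v) = g (min u.val v.val) := rfl

set_option maxHeartbeats 1000000 in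
lemma key {n : ℕ} {u v : Fin n} {τ : ℕ}
    (h : TReach (pathGraph n) (myt n) u v τ) :
    (u.val % 2 = 0 ∧ ((v.val = u.val + 1 ∧ τ = u.val + 2) ∨
      (v.val + 1 = u.val ∧ τ + 1 = u.val) ∨ (v.val + 2 = u.val ∧ τ = u.val))) ∨
    (u.val % 2 = 1 ∧ ((v.val = u.val + 1 ∧ τ = u.val) ∨
      (v.val = u.val + 2 ∧ τ = u.val + 3) ∨ (v.val + 1 = u.val ∧ τ = u.val + 1))) := by
  induction h with
  | single h =>
      rw [pathGraph_adj] at h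
      rw [myt_mk]
      unfold g
      omega
  | cons h hadj hlt ih =>
      rw [pathGraph_adj] at hadj
      rw [myt_mk] at hlt ⊢
      unfold g at hlt ⊢
      omega

lemma reach_ncard_le {n : ℕ} (u : Fin n) :
    (reachSet (pathGraph n) (myt n) u).ncard ≤ 4 := by
  set l : ℕ := if u.val % 2 = 0 then u.val - 2 else u.val - 1 with hl
  have hsub : reachSet (pathGraph n) (myt n) u ⊆ Fin.val ⁻¹' (Set.Ico l (l + 4)) := by
    rintro v (rfl | ⟨τ, h⟩)
    · simp only [Set.mem_preimage, Set.mem_Ico, hl]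
      split_ifs <;> omega
    · have := key h
      simp only [Set.mem_preimage, Set.mem_Ico, hl]
      split_ifs <;> omega
  have h1 : (Fin.val ⁻¹' (Set.Ico l (l + 4)) : Set (Fin n)).ncard ≤ (Set.Ico l (l + 4)).ncard := by
    rw [← Set.ncard_image_of_injective _ Fin.val_injective]
    exact Set.ncard_le_ncard (Set.image_preimage_subset _ _) (Set.finite_Ico _ _)
  have h2 : (Set.Ico l (l + 4)).ncard = 4 := by
    rw [← Finset.coe_Ico, Set.ncard_coe_finset, Nat.card_Ico]
    omega
  have h3 := Set.ncard_le_ncard hsub (Set.toFinite _)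
  omega

/-- For a path on at least five vertices, the minimum over all injective time
assignments of the maximum temporal reachability equals four. -/
theorem stmt_12 (n : ℕ) (hn : 5 ≤ n) :
    IsLeast {k : ℕ | ∃ t : Sym2 (Fin n) → ℕ,
        Set.InjOn t (SimpleGraph.pathGraph n).edgeSet ∧
        k = Finset.univ.sup fun v : Fin n =>
          (reachSet (SimpleGraph.pathGraph n) t v).ncard} 4 := by
  set p0 : Fin n := ⟨0, by omega⟩
  set p1 : Fin n := ⟨1, by omega⟩
  set p2 : Fin n := ⟨2, by omega⟩
  set p3 : Fin n := ⟨3, by omega⟩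
  set p4 : Fin n := ⟨4, by omega⟩
  have a01 : (pathGraph n).Adj p0 p1 := by rw [pathGraph_adj]; left; rfl
  have a12 : (pathGraph n).Adj p1 p2 := by rw [pathGraph_adj]; left; rfl
  have a23 : (pathGraph n).Adj p2 p3 := by rw [pathGraph_adj]; left; rfl
  have a34 : (pathGraph n).Adj p3 p4 := by rw [pathGraph_adj]; left; rfl
  have d01 : p0 ≠ p1 := by simp [p0, p1, Fin.ext_iff]
  have d02 : p0 ≠ p2 := by simp [p0, p2, Fin.ext_iff]
  have d03 : p0 ≠ p3 := by simp [p0, p3, Fin.ext_iff]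
  have d04 : p0 ≠ p4 := by simp [p0, p4, Fin.ext_iff]
  have d12 : p1 ≠ p2 := by simp [p1, p2, Fin.ext_iff]
  have d13 : p1 ≠ p3 := by simp [p1, p3, Fin.ext_iff]
  have d14 : p1 ≠ p4 := by simp [p1, p4, Fin.ext_iff]
  have d23 : p2 ≠ p3 := by simp [p2, p3, Fin.ext_iff]
  have d24 : p2 ≠ p4 := by simp [p2, p4, Fin.ext_iff]
  have d34 : p3 ≠ p4 := by simp [p3, p4, Fin.ext_iff]
  constructor
  · -- membership: the assignment `myt n` achieves maximum reachability 4
    refine ⟨myt n, ?_, ?_⟩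
    · -- injectivity on the edge set
      intro e he f hf hef
      induction e using Sym2.inductionOn with
      | hf a b =>
        induction f using Sym2.inductionOn with
        | hf c d =>
          rw [SimpleGraph.mem_edgeSet, pathGraph_adj] at he hf
          rw [myt_mk, myt_mk] at hef
          unfold g at hef
          rw [Sym2.eq_iff]
          have hab : a.val < n := a.isLt
          have hcd : c.val < n := c.isLt
          simp only [Fin.ext_iff]
          omega
    · -- the max reachability is exactly 4
      have hle : (Finset.univ.sup fun v : Fin n =>
          (reachSet (pathGraph n) (myt n) v).ncard) ≤ 4 :=
        Finset.sup_le fun v _ => reach_ncard_le v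
      have hget : 4 ≤ (reachSet (pathGraph n) (myt n) p2).ncard := by
        have hm3 : p3 ∈ reachSet (pathGraph n) (myt n) p2 :=
          mem_reachSet_of_treach (.single a23)
        have hm1 : p1 ∈ reachSet (pathGraph n) (myt n) p2 :=
          mem_reachSet_of_treach (.single a12.symm)
        have hm0 : p0 ∈ reachSet (pathGraph n) (myt n) p2 := by
          refine mem_reachSet_of_treach (.cons (.single a12.symm) a01.symm ?_)
          rw [myt_mk, myt_mk]
          unfold g
          simp [p0, p1, p2]
        exact four_le_ncard d13.symm d03.symm d23.symm d01.symm d12 d02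
          hm3 hm1 hm0 (self_mem_reachSet _ _ _) (Set.toFinite _)
      have hge : 4 ≤ (Finset.univ.sup fun v : Fin n =>
          (reachSet (pathGraph n) (myt n) v).ncard) :=
        le_trans hget (Finset.le_sup (f := fun v : Fin n =>
          (reachSet (pathGraph n) (myt n) v).ncard) (Finset.mem_univ p2))
      omega
  · -- lower bound: any injective assignment has max reachability at least 4
    rintro k ⟨t, hinj, rfl⟩
    have e01 : s(p0, p1) ∈ (pathGraph n).edgeSet := a01
    have e12 : s(p1, p2) ∈ (pathGraph n).edgeSet := a12
    have e23 : s(p2, p3) ∈ (pathGraph n).edgeSet := a23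
    have e34 : s(p3, p4) ∈ (pathGraph n).edgeSet := a34
    have ne01 : s(p0, p1) ≠ s(p1, p2) := by
      rw [Ne, Sym2.eq_iff]; push_neg; exact ⟨fun h => absurd h d01, fun h => absurd h d02⟩
    have ne12 : s(p1, p2) ≠ s(p2, p3) := by
      rw [Ne, Sym2.eq_iff]; push_neg; exact ⟨fun h => absurd h d12, fun h => absurd h d13⟩
    have ne23 : s(p2, p3) ≠ s(p3, p4) := by
      rw [Ne, Sym2.eq_iff]; push_neg; exact ⟨fun h => absurd h d23, fun h => absurd h d24⟩
    have ht01 : t s(p0, p1) ≠ t s(p1, p2) := fun h => ne01 (hinj e01 e12 h)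
    have ht12 : t s(p1, p2) ≠ t s(p2, p3) := fun h => ne12 (hinj e12 e23 h)
    have ht23 : t s(p2, p3) ≠ t s(p3, p4) := fun h => ne23 (hinj e23 e34 h)
    have sw01 : s(p1, p0) = s(p0, p1) := Sym2.eq_swap
    have sw12 : s(p2, p1) = s(p1, p2) := Sym2.eq_swap
    have sw23 : s(p3, p2) = s(p2, p3) := Sym2.eq_swap
    have sw34 : s(p4, p3) = s(p3, p4) := Sym2.eq_swap
    -- find a vertex that reaches at least 3 others
    have main : ∃ u : Fin n, 4 ≤ (reachSet (pathGraph n) t u).ncard := by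
      rcases lt_or_gt_of_ne ht01 with h01 | h01
      · rcases lt_or_gt_of_ne ht12 with h12 | h12
        · -- increasing chain t0 < t1 < t2 : p0 reaches p1, p2, p3
          obtain ⟨m1, m2, m3⟩ := chain_reach a01 a12 a23 h01 h12
          exact ⟨p0, four_le_ncard d12 d13 d01.symm d23 d02.symm d03.symm
            m1 m2 m3 (self_mem_reachSet _ _ _) (Set.toFinite _)⟩
        · rcases lt_or_gt_of_ne ht23 with h23 | h23
          · -- valley at edge (p2,p3): p3 reaches p2, p1, p4
            have L : t s(p3, p2) < t s(p2, p1) := by rw [sw23, sw12]; omega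
            obtain ⟨m1, m2, m3⟩ := valley_reach a23.symm a12.symm a34 L
            exact ⟨p3, four_le_ncard d12.symm d24 d23 d14 d13 d34.symm
              m1 m2 m3 (self_mem_reachSet _ _ _) (Set.toFinite _)⟩
          · -- decreasing chain t1 > t2 > t3 : p4 reaches p3, p2, p1
            have L1 : t s(p4, p3) < t s(p3, p2) := by rw [sw34, sw23]; omega
            have L2 : t s(p3, p2) < t s(p2, p1) := by rw [sw23, sw12]; omega
            obtain ⟨m1, m2, m3⟩ := chain_reach a34.symm a23.symm a12.symm L1 L2
            exact ⟨p4, four_le_ncard d23.symm d13.symm d34 d12.symm d24 d14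
              m1 m2 m3 (self_mem_reachSet _ _ _) (Set.toFinite _)⟩
      · rcases lt_or_gt_of_ne ht12 with h12 | h12
        · -- valley at edge (p1,p2): p2 reaches p1, p0, p3
          have L : t s(p2, p1) < t s(p1, p0) := by rw [sw12, sw01]; omega
          obtain ⟨m1, m2, m3⟩ := valley_reach a12.symm a01.symm a23 L
          exact ⟨p2, four_le_ncard d01.symm d13 d12 d03 d02 d23.symm
            m1 m2 m3 (self_mem_reachSet _ _ _) (Set.toFinite _)⟩
        · -- decreasing chain t0 > t1 > t2 : p3 reaches p2, p1, p0
          have L1 : t s(p3, p2) < t s(p2, p1) := by rw [sw23, sw12]; omega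
          have L2 : t s(p2, p1) < t s(p1, p0) := by rw [sw12, sw01]; omega
          obtain ⟨m1, m2, m3⟩ := chain_reach a23.symm a12.symm a01.symm L1 L2
          exact ⟨p3, four_le_ncard d12.symm d02.symm d23 d01.symm d13 d03
            m1 m2 m3 (self_mem_reachSet _ _ _) (Set.toFinite _)⟩
    obtain ⟨u, hu⟩ := main
    exact le_trans hu (Finset.le_sup (f := fun v : Fin n =>
      (reachSet (pathGraph n) t v).ncard) (Finset.mem_univ u))
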